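/- The box P(a,b,c|x,y,z) = 1/2 if a = b ⊕ xy and c = b ⊕ zy, and 0 otherwise, satisfies the four RC constraint families but violates the no-signaling constraint for Bob: there exist a,c,x,z and y ≠ y' with Σ_b P(a,b,c|x,y,z) ≠ Σ_b P(a,b,c|x,y',z). -/

import Mathlib

set_option maxHeartbeats 2000000

noncomputable def doublePRBox (a b c x y z : ZMod 2) : ℝ :=
  if a = b + x * y ∧ c = b + z * y then 1 / 2 else 0

lemma sum2' (f : ZMod 2 → ℝ) : ∑ i : ZMod 2, f i = f 0 + f 1 := by
  exact Fin.sum_univ_two f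

lemma zmod2cases' (v : ZMod 2) : v = 0 ∨ v = 1 := by revert v; decide

/-- The double-PR box satisfies the four RC constraint families but violates the
no-signaling constraint for Bob. -/
theorem doublePRBox_RC_but_signaling :
    (∀ b c x x' y z : ZMod 2,
      ∑ a : ZMod 2, doublePRBox a b c x y z = ∑ a : ZMod 2, doublePRBox a b c x' y z) ∧
    (∀ a b x y z z' : ZMod 2,
      ∑ c : ZMod 2, doublePRBox a b c x y z = ∑ c : ZMod 2, doublePRBox a b c x y z') ∧
    (∀ a x y y' z z' : ZMod 2,
      ∑ b : ZMod 2, ∑ c : ZMod 2, doublePRBox a b c x y z =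
        ∑ b : ZMod 2, ∑ c : ZMod 2, doublePRBox a b c x y' z') ∧
    (∀ c x x' y y' z : ZMod 2,
      ∑ a : ZMod 2, ∑ b : ZMod 2, doublePRBox a b c x y z =
        ∑ a : ZMod 2, ∑ b : ZMod 2, doublePRBox a b c x' y' z) ∧
    (∃ a c x z y y' : ZMod 2, y ≠ y' ∧
      ∑ b : ZMod 2, doublePRBox a b c x y z ≠
        ∑ b : ZMod 2, doublePRBox a b c x y' z) := by
  refine ⟨?_, ?_, ?_, ?_, ?_⟩
  · intro b c x x' y z
    rcases zmod2cases' b with rfl|rfl <;> rcases zmod2cases' c with rfl|rfl <;>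
    rcases zmod2cases' x with rfl|rfl <;> rcases zmod2cases' x' with rfl|rfl <;>
    rcases zmod2cases' y with rfl|rfl <;> rcases zmod2cases' z with rfl|rfl <;>
      simp (config := { decide := true }) [sum2', doublePRBox]
  · intro a b x y z z'
    rcases zmod2cases' a with rfl|rfl <;> rcases zmod2cases' b with rfl|rfl <;>
    rcases zmod2cases' x with rfl|rfl <;> rcases zmod2cases' y with rfl|rfl <;>
    rcases zmod2cases' z with rfl|rfl <;> rcases zmod2cases' z' with rfl|rfl <;>
      simp (config := { decide := true }) [sum2', doublePRBox]
  · intro a x y y' z z'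
    rcases zmod2cases' a with rfl|rfl <;> rcases zmod2cases' x with rfl|rfl <;>
    rcases zmod2cases' y with rfl|rfl <;> rcases zmod2cases' y' with rfl|rfl <;>
    rcases zmod2cases' z with rfl|rfl <;> rcases zmod2cases' z' with rfl|rfl <;>
      simp (config := { decide := true }) [sum2', doublePRBox]
  · intro c x x' y y' z
    rcases zmod2cases' c with rfl|rfl <;> rcases zmod2cases' x with rfl|rfl <;>
    rcases zmod2cases' x' with rfl|rfl <;> rcases zmod2cases' y with rfl|rfl <;>
    rcases zmod2cases' y' with rfl|rfl <;> rcases zmod2cases' z with rfl|rfl <;>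
      simp (config := { decide := true }) [sum2', doublePRBox]
  · refine ⟨0, 0, 0, 1, 0, 1, by decide, ?_⟩
    simp (config := { decide := true }) [sum2', doublePRBox]
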